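/- Let υ = (υ₁, υ₂, υ₃) : I → ℝ³ be a smooth unit-speed Legendre curve in 𝒬³_α and ϕ : I → ℝ a smooth function with υ₁' = cos ϕ/υ₁, υ₂' = sin ϕ/υ₁, υ₃' = 2 sin ϕ, and assume κ(s) := ϕ'(s) + sin ϕ(s)/υ₁(s)² > 0 for all s ∈ I. Let N(s) = φ_{υ(s)}(υ'(s)) be the principal normal. Then ∇_{υ'}N(s) = −κ(s)·υ'(s) + υ₁(s)^{−2}·ξ for all s ∈ I; in particular the geodesic torsion of υ is τ = 1/υ₁². -/

import Mathlib

noncomputable section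

/-- Points and tangent vectors of ℝ³, written as triples `(x, y, z)`. -/
abbrev R3 : Type := ℝ × ℝ × ℝ

/-- The underlying open set `{(x,y,z) : x > 0}` of `𝒬³_α`. -/
def U3 : Set R3 := {p : R3 | 0 < p.1}

/-- The contact form `η` on `𝒬³_α` : `η_p(v) = −2x·v₂ + v₃`. -/
def etaQ (p v : R3) : ℝ := -2 * p.1 * v.2.1 + v.2.2

/-- The Reeb vector field `ξ = (0,0,1)`. -/
def xiQ : R3 := (0, 0, 1)

/-- The `(1,1)`-tensor field `φ` : `φ_p(v) = (−v₂, v₁, 2x·v₁)`. -/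
def phiQ (p v : R3) : R3 := (-v.2.1, v.1, 2 * p.1 * v.1)

/-- The pseudo-metric `g_p(u,v) = x²(u₁v₁ + u₂v₂) + ε·η_p(u)·η_p(v)` on `𝒬³_α`. -/
def gQ (ε : ℝ) (p u v : R3) : ℝ :=
  p.1 ^ 2 * (u.1 * v.1 + u.2.1 * v.2.1) + ε * etaQ p u * etaQ p v

def Gexp (ε : ℝ) (p u v : R3) : R3 :=
  ((p.1 * (u.1 * v.1 - u.2.1 * v.2.1) + ε * (u.2.1 * etaQ p v + v.2.1 * etaQ p u)) / p.1 ^ 2,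
   (p.1 * (u.1 * v.2.1 + v.1 * u.2.1) - ε * (u.1 * etaQ p v + v.1 * etaQ p u)) / p.1 ^ 2,
   -(u.1 * v.2.1 + v.1 * u.2.1) +
     2 * p.1 * ((p.1 * (u.1 * v.2.1 + v.1 * u.2.1) - ε * (u.1 * etaQ p v + v.1 * etaQ p u)) / p.1 ^ 2))

lemma gQ_fderiv (ε : ℝ) (p u v w : R3) :
    fderiv ℝ (fun q => gQ ε q v w) p u =
      u.1 * ((v.1 * w.1 + v.2.1 * w.2.1) * (2 * p.1) +
        ε * ((-2 * v.2.1) * etaQ p w + etaQ p v * (-2 * w.2.1))) := by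
  set A : ℝ := v.1 * w.1 + v.2.1 * w.2.1 with hA
  set G : ℝ → ℝ := fun t =>
    A * t ^ 2 + ε * ((-2 * v.2.1) * t + v.2.2) * ((-2 * w.2.1) * t + w.2.2) with hG
  have hB : HasDerivAt (fun t : ℝ => (-2 * v.2.1) * t + v.2.2) (-2 * v.2.1) p.1 := by
    simpa using ((hasDerivAt_id p.1).const_mul (-2 * v.2.1)).add_const v.2.2
  have hC : HasDerivAt (fun t : ℝ => (-2 * w.2.1) * t + w.2.2) (-2 * w.2.1) p.1 := by
    simpa using ((hasDerivAt_id p.1).const_mul (-2 * w.2.1)).add_const w.2.2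
  have h1 : HasDerivAt (fun t : ℝ => A * t ^ 2) (A * (2 * p.1)) p.1 := by
    simpa using (hasDerivAt_pow 2 p.1).const_mul A
  have h2 := ((hB.mul hC).const_mul ε)
  have hGd : HasDerivAt G
      (A * (2 * p.1) + ε * ((-2 * v.2.1) * ((-2 * w.2.1) * p.1 + w.2.2) +
        ((-2 * v.2.1) * p.1 + v.2.2) * (-2 * w.2.1))) p.1 := by
    exact h1.add (by simpa [mul_comm, mul_left_comm, mul_assoc, mul_add, add_mul] using h2)
  have hfun : (fun q : R3 => gQ ε q v w) = fun q => G q.1 := by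
    funext q; simp only [gQ, etaQ, hG, hA]; ring
  have hcomp : HasFDerivAt (fun q : R3 => G q.1)
      ((ContinuousLinearMap.smulRight (1 : ℝ →L[ℝ] ℝ)
        (A * (2 * p.1) + ε * ((-2 * v.2.1) * ((-2 * w.2.1) * p.1 + w.2.2) +
          ((-2 * v.2.1) * p.1 + v.2.2) * (-2 * w.2.1)))).comp
        (ContinuousLinearMap.fst ℝ ℝ (ℝ × ℝ))) p :=
    (hGd.hasFDerivAt).comp p (hasFDerivAt_fst)
  rw [hfun, hcomp.fderiv]
  simp only [ContinuousLinearMap.coe_comp', Function.comp_apply,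
    ContinuousLinearMap.coe_fst', ContinuousLinearMap.smulRight_apply,
    ContinuousLinearMap.one_apply, smul_eq_mul, etaQ]
  ring

lemma gQ_nondeg (ε : ℝ) (hε : ε = 1 ∨ ε = -1) (p : R3) (hx : p.1 ≠ 0) (z z' : R3)
    (h : ∀ w : R3, gQ ε p z w = gQ ε p z' w) : z = z' := by
  have hεne : ε ≠ 0 := by rcases hε with h' | h' <;> simp [h']
  have e1 := h (1, 0, 0)
  have e2 := h (0, 1, 0)
  have e3 := h (0, 0, 1)
  simp only [gQ, etaQ] at e1 e2 e3
  have hz1 : z.1 = z'.1 :=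
    mul_left_cancel₀ (pow_ne_zero 2 hx) (by linear_combination e1)
  have hη : -2 * p.1 * z.2.1 + z.2.2 = -2 * p.1 * z'.2.1 + z'.2.2 :=
    mul_left_cancel₀ hεne (by linear_combination e3)
  have hz2 : z.2.1 = z'.2.1 :=
    mul_left_cancel₀ (pow_ne_zero 2 hx) (by linear_combination e2 + 2 * p.1 * ε * hη)
  have hz3 : z.2.2 = z'.2.2 := by linear_combination hη + 2 * p.1 * hz2
  exact Prod.ext hz1 (Prod.ext hz2 hz3)

lemma Gamma_eq (ε : ℝ) (hε : ε = 1 ∨ ε = -1)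
    (Γ : R3 → R3 →ₗ[ℝ] R3 →ₗ[ℝ] R3)
    (hΓsymm : ∀ p ∈ U3, ∀ u v : R3, Γ p u v = Γ p v u)
    (hΓmetric : ∀ X Y Z : R3 → R3,
      ContDiffOn ℝ (⊤ : ℕ∞) X U3 → ContDiffOn ℝ (⊤ : ℕ∞) Y U3 → ContDiffOn ℝ (⊤ : ℕ∞) Z U3 →
      ∀ p ∈ U3, fderiv ℝ (fun q => gQ ε q (Y q) (Z q)) p (X p) =
        gQ ε p (fderiv ℝ Y p (X p) + Γ p (X p) (Y p)) (Z p) +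
        gQ ε p (Y p) (fderiv ℝ Z p (X p) + Γ p (X p) (Z p)))
    (p : R3) (hp : p ∈ U3) (u v : R3) : Γ p u v = Gexp ε p u v := by
  have hxpos : 0 < p.1 := hp
  have hx : p.1 ≠ 0 := ne_of_gt hxpos
  have gsymm : ∀ a b : R3, gQ ε p a b = gQ ε p b a := by
    intro a b; simp only [gQ]; ring
  have key : ∀ a b c : R3, fderiv ℝ (fun q => gQ ε q b c) p a =
      gQ ε p (Γ p a b) c + gQ ε p b (Γ p a c) := by
    intro a b c
    have := hΓmetric (fun _ => a) (fun _ => b) (fun _ => c)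
      contDiffOn_const contDiffOn_const contDiffOn_const p hp
    simpa using this
  apply gQ_nondeg ε hε p hx
  intro w
  have h1 := key u v w
  have h2 := key v u w
  have h3 := key w u v
  rw [hΓsymm p hp v u] at h2
  rw [hΓsymm p hp w u, hΓsymm p hp w v] at h3
  have hg1 := gsymm v (Γ p u w)
  have half : 2 * gQ ε p (Γ p u v) w =
      fderiv ℝ (fun q => gQ ε q v w) p u + fderiv ℝ (fun q => gQ ε q u w) p v -
        fderiv ℝ (fun q => gQ ε q u v) p w := by linarith
  have hGe : 2 * gQ ε p (Gexp ε p u v) w =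
      fderiv ℝ (fun q => gQ ε q v w) p u + fderiv ℝ (fun q => gQ ε q u w) p v -
        fderiv ℝ (fun q => gQ ε q u v) p w := by
    rw [gQ_fderiv, gQ_fderiv, gQ_fderiv]
    rcases hε with h' | h' <;> subst h' <;>
      · simp only [gQ, etaQ, Gexp]
        field_simp
        ring
  have := half.trans hGe.symm
  linarith

/-- for a unit-speed Legendre curve `υ` in `𝒬³_α` with angle function `ϕ`
and positive geodesic curvature `κ = ϕ' + sin ϕ/υ₁²`, the principal normal
`N = φ(υ')` satisfies `∇_{υ'}N = −κ·υ' + υ₁^{−2}·ξ`; in particular the geodesic torsion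
of `υ` is `τ = 1/υ₁²`, i.e. `τ = |α|` with `α = 1/x²`. -/
theorem legendre_torsion_Q (ε : ℝ) (hε : ε = 1 ∨ ε = -1)
    (Γ : R3 → R3 →ₗ[ℝ] R3 →ₗ[ℝ] R3)
    (hΓsmooth : ∀ u v : R3, ContDiffOn ℝ (⊤ : ℕ∞) (fun p => Γ p u v) U3)
    (hΓsymm : ∀ p ∈ U3, ∀ u v : R3, Γ p u v = Γ p v u)
    (hΓmetric : ∀ X Y Z : R3 → R3,
      ContDiffOn ℝ (⊤ : ℕ∞) X U3 → ContDiffOn ℝ (⊤ : ℕ∞) Y U3 → ContDiffOn ℝ (⊤ : ℕ∞) Z U3 →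
      ∀ p ∈ U3, fderiv ℝ (fun q => gQ ε q (Y q) (Z q)) p (X p) =
        gQ ε p (fderiv ℝ Y p (X p) + Γ p (X p) (Y p)) (Z p) +
        gQ ε p (Y p) (fderiv ℝ Z p (X p) + Γ p (X p) (Z p)))
    (I : Set ℝ) (hIopen : IsOpen I) (hIconn : I.OrdConnected)
    (υ : ℝ → R3) (hυ : ContDiff ℝ (⊤ : ℕ∞) υ)
    (hpos : ∀ s ∈ I, 0 < (υ s).1)
    (hLeg : ∀ s ∈ I, etaQ (υ s) (deriv υ s) = 0)
    (hUnit : ∀ s ∈ I, gQ ε (υ s) (deriv υ s) (deriv υ s) = 1)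
    (ϕ : ℝ → ℝ) (hϕ : ContDiffOn ℝ (⊤ : ℕ∞) ϕ I)
    (h1 : ∀ s ∈ I, (deriv υ s).1 = Real.cos (ϕ s) / (υ s).1)
    (h2 : ∀ s ∈ I, (deriv υ s).2.1 = Real.sin (ϕ s) / (υ s).1)
    (h3 : ∀ s ∈ I, (deriv υ s).2.2 = 2 * Real.sin (ϕ s))
    (hκ : ∀ s ∈ I, 0 < deriv ϕ s + Real.sin (ϕ s) / (υ s).1 ^ 2) :
    ∀ s ∈ I,
      deriv (fun t => phiQ (υ t) (deriv υ t)) s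
          + Γ (υ s) (deriv υ s) (phiQ (υ s) (deriv υ s)) =
        (-(deriv ϕ s + Real.sin (ϕ s) / (υ s).1 ^ 2)) • deriv υ s
          + (1 / (υ s).1 ^ 2) • xiQ ∧
      Real.sqrt |gQ ε (υ s) ((1 / (υ s).1 ^ 2) • xiQ) ((1 / (υ s).1 ^ 2) • xiQ)| =
        1 / (υ s).1 ^ 2 := by
  intro s hs
  have hsI : I ∈ nhds s := hIopen.mem_nhds hs
  have hxpos : 0 < (υ s).1 := hpos s hs
  have hx : (υ s).1 ≠ 0 := ne_of_gt hxpos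
  -- derivative of ϕ
  have hϕd : HasDerivAt ϕ (deriv ϕ s) s :=
    ((hϕ.contDiffAt hsI).differentiableAt (by simp)).hasDerivAt
  -- derivative of first coordinate of υ
  have hυd : HasDerivAt υ (deriv υ s) s := (hυ.differentiable (by simp) s).hasDerivAt
  have hx1 : HasDerivAt (fun t => (υ t).1) ((deriv υ s).1) s := by
    exact (ContinuousLinearMap.fst ℝ ℝ (ℝ × ℝ)).hasFDerivAt.comp_hasDerivAt s hυd
  have hsin : HasDerivAt (fun t => Real.sin (ϕ t)) (Real.cos (ϕ s) * deriv ϕ s) s :=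
    (Real.hasDerivAt_sin (ϕ s)).comp s hϕd
  have hcos : HasDerivAt (fun t => Real.cos (ϕ t)) (-Real.sin (ϕ s) * deriv ϕ s) s :=
    (Real.hasDerivAt_cos (ϕ s)).comp s hϕd
  set F0 : ℝ → R3 := fun t =>
    (-Real.sin (ϕ t) / (υ t).1, Real.cos (ϕ t) / (υ t).1, 2 * Real.cos (ϕ t)) with hF0def
  have hN1 : HasDerivAt (fun t => -Real.sin (ϕ t) / (υ t).1)
      ((-(Real.cos (ϕ s) * deriv ϕ s) * (υ s).1 - -Real.sin (ϕ s) * (deriv υ s).1) /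
        (υ s).1 ^ 2) s := hsin.neg.div hx1 hx
  have hN2 : HasDerivAt (fun t => Real.cos (ϕ t) / (υ t).1)
      ((-Real.sin (ϕ s) * deriv ϕ s * (υ s).1 - Real.cos (ϕ s) * (deriv υ s).1) /
        (υ s).1 ^ 2) s := hcos.div hx1 hx
  have hN3 : HasDerivAt (fun t => 2 * Real.cos (ϕ t)) (2 * (-Real.sin (ϕ s) * deriv ϕ s)) s :=
    hcos.const_mul 2
  have hF0 : HasDerivAt F0
      (((-(Real.cos (ϕ s) * deriv ϕ s) * (υ s).1 - -Real.sin (ϕ s) * (deriv υ s).1) /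
          (υ s).1 ^ 2,
        (-Real.sin (ϕ s) * deriv ϕ s * (υ s).1 - Real.cos (ϕ s) * (deriv υ s).1) /
          (υ s).1 ^ 2,
        2 * (-Real.sin (ϕ s) * deriv ϕ s))) s := hN1.prodMk (hN2.prodMk hN3)
  have hev : (fun t => phiQ (υ t) (deriv υ t)) =ᶠ[nhds s] F0 := by
    filter_upwards [hsI] with t ht
    have hxt : (υ t).1 ≠ 0 := ne_of_gt (hpos t ht)
    simp only [phiQ, hF0def]
    refine Prod.ext ?_ (Prod.ext ?_ ?_)
    · simp [h2 t ht]; ring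
    · simp [h1 t ht]
    · simp [h1 t ht]; field_simp
  have hNd : HasDerivAt (fun t => phiQ (υ t) (deriv υ t))
      (((-(Real.cos (ϕ s) * deriv ϕ s) * (υ s).1 - -Real.sin (ϕ s) * (deriv υ s).1) /
          (υ s).1 ^ 2,
        (-Real.sin (ϕ s) * deriv ϕ s * (υ s).1 - Real.cos (ϕ s) * (deriv υ s).1) /
          (υ s).1 ^ 2,
        2 * (-Real.sin (ϕ s) * deriv ϕ s))) s := hF0.congr_of_eventuallyEq hev
  have hderiv := hNd.deriv
  have hΓval := Gamma_eq ε hε Γ hΓsymm hΓmetric (υ s) hxpos (deriv υ s)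
    (phiQ (υ s) (deriv υ s))
  have hu : deriv υ s =
      (Real.cos (ϕ s) / (υ s).1, Real.sin (ϕ s) / (υ s).1, 2 * Real.sin (ϕ s)) :=
    Prod.ext (h1 s hs) (Prod.ext (h2 s hs) (h3 s hs))
  constructor
  · rw [hderiv, hΓval, hu]
    have hsc := Real.sin_sq_add_cos_sq (ϕ s)
    simp only [Gexp, phiQ, etaQ, xiQ, Prod.smul_mk, smul_eq_mul, Prod.mk_add_mk,
      Prod.mk.injEq]
    refine ⟨?_, ?_, ?_⟩
    · field_simp; ring
    · field_simp; ring
    · field_simp; linear_combination hsc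
  · have hgv : gQ ε (υ s) ((1 / (υ s).1 ^ 2) • xiQ) ((1 / (υ s).1 ^ 2) • xiQ) =
        ε / (υ s).1 ^ 4 := by
      simp only [xiQ, Prod.smul_mk, smul_eq_mul, gQ, etaQ]
      ring
    rw [hgv]
    have habs : |ε / (υ s).1 ^ 4| = 1 / (υ s).1 ^ 4 := by
      rcases hε with h' | h' <;> subst h' <;>
        rw [abs_div] <;> simp [abs_of_pos, hxpos, abs_of_pos (pow_pos hxpos 4)]
    rw [habs]
    have : (1 : ℝ) / (υ s).1 ^ 4 = (1 / (υ s).1 ^ 2) ^ 2 := by ring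
    rw [this, Real.sqrt_sq (by positivity)]
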